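/- For every real δ with 0 < δ < 0.018 and every integer n ≥ 1, there exists a set S of binary strings of length n such that any two distinct elements of S have Levenshtein edit distance greater than 2·⌊δn⌋, and the cardinality of S is at least 2^{n/2} (as a real number). -/

import Mathlib

/-!
Take a maximal family `S` of length-`n` binary words with pairwise edit distance greater than
`r = 2⌊δn⌋`. By maximality the edit balls of radius `r` around the words of `S` cover all `2^n`
words. A word within distance `r` of `t` shares a subsequence of length `n - r` with `t`; `t` has
`C(n,r)` such subsequences and each lies in at most `C(n,r)·2^r` words of length `n`, so a ball
has at most `C(n,r)²·2^r` elements. The binomial term bound `C(n,r) ≤ p^{-r}(1-p)^{r-n}` at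
`p = 9/250 = 0.036` makes this at most `2^{n/2}` as soon as `r ≤ 0.036 n`.
-/

/-- Cost structure for Levenshtein distance (removed from Mathlib; restored with its old meaning). -/
structure Levenshtein.Cost (α β δ : Type*) where
  delete : α → δ
  insert : β → δ
  substitute : α → β → δ

/-- Default unit costs (as in the older Mathlib). -/
def Levenshtein.defaultCost {α : Type*} [DecidableEq α] : Levenshtein.Cost α α ℕ where
  delete _ := 1
  insert _ := 1
  substitute a b := if a = b then 0 else 1

/-- Levenshtein distance, given by the recursion the older Mathlib proved for its definition. -/
def levenshtein {α β δ : Type*} [AddZeroClass δ] [Min δ] (C : Levenshtein.Cost α β δ) :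
    List α → List β → δ
  | [], [] => 0
  | x :: xs, [] => C.delete x + levenshtein C xs []
  | [], y :: ys => C.insert y + levenshtein C [] ys
  | x :: xs, y :: ys =>
    min (C.delete x + levenshtein C xs (y :: ys))
      (min (C.insert y + levenshtein C (x :: xs) ys) (C.substitute x y + levenshtein C xs ys))

open Finset
open scoped List

namespace Levenshtein
variable {α : Type*} [DecidableEq α]

@[simp] theorem defaultCost_delete (a : α) : (defaultCost (α := α)).delete a = 1 := rfl
@[simp] theorem defaultCost_insert (a : α) : (defaultCost (α := α)).insert a = 1 := rfl
@[simp] theorem defaultCost_substitute (a b : α) :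
    (defaultCost (α := α)).substitute a b = if a = b then 0 else 1 := rfl

@[simp] theorem levenshtein_defaultCost_nil_left (y : List α) :
    levenshtein defaultCost [] y = y.length := by
  induction y with
  | nil => simp [levenshtein]
  | cons b y ih => simp [levenshtein, ih, add_comm]

@[simp] theorem levenshtein_defaultCost_nil_right (x : List α) :
    levenshtein defaultCost x [] = x.length := by
  induction x with
  | nil => simp
  | cons a x ih => simp [levenshtein, ih, add_comm]

@[simp] theorem levenshtein_defaultCost_self (x : List α) : levenshtein defaultCost x x = 0 := by
  induction x with
  | nil => simp
  | cons a x ih => simp [levenshtein, ih]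

theorem levenshtein_defaultCost_comm (x y : List α) :
    levenshtein defaultCost x y = levenshtein defaultCost y x := by
  induction x generalizing y with
  | nil => simp
  | cons a x ihx =>
    induction y with
    | nil => simp
    | cons b y ihy =>
      simp only [levenshtein, defaultCost_delete, defaultCost_insert, defaultCost_substitute,
        ihx, ihy, eq_comm (a := a)]
      omega

theorem exists_sublist_sublist_length_le_add_levenshtein (x y : List α) :
    ∃ z, z <+ x ∧ z <+ y ∧ x.length ≤ z.length + levenshtein defaultCost x y := by
  induction x generalizing y with
  | nil => exact ⟨[], .refl _, List.nil_sublist _, by simp⟩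
  | cons a x ihx =>
    induction y with
    | nil => exact ⟨[], List.nil_sublist _, .refl _, by simp⟩
    | cons b y ihy =>
      obtain ⟨zd, hzdx, hzdy, hd⟩ := ihx (b :: y)
      obtain ⟨zi, hzix, hziy, hi⟩ := ihy
      obtain ⟨zs, hzsx, hzsy, hs⟩ := ihx y
      simp only [levenshtein, defaultCost_delete, defaultCost_insert, defaultCost_substitute]
      rcases min_choice (1 + levenshtein defaultCost x (b :: y))
        (min (1 + levenshtein defaultCost (a :: x) y)
          ((if a = b then 0 else 1) + levenshtein defaultCost x y)) with h | h <;> rw [h]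
      · exact ⟨zd, hzdx.cons a, hzdy, by simp only [List.length_cons]; omega⟩
      rcases min_choice (1 + levenshtein defaultCost (a :: x) y)
        ((if a = b then 0 else 1) + levenshtein defaultCost x y) with h | h <;> rw [h]
      · exact ⟨zi, hzix, hziy.cons b, by omega⟩
      by_cases hab : a = b
      · subst hab
        exact ⟨a :: zs, hzsx.cons_cons a, hzsy.cons_cons a, by simp only [List.length_cons]; omega⟩
      · exact ⟨zs, hzsx.cons a, hzsy.cons b, by
          simp only [List.length_cons, if_neg hab]; omega⟩

end Levenshtein

def words (α : Type*) [Fintype α] (n : ℕ) : Finset (List α) :=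
  (univ : Finset (List.Vector α n)).map ⟨List.Vector.toList, List.Vector.toList_injective⟩

section Words
variable {α : Type*} [Fintype α] {n : ℕ}

@[simp] theorem mem_words {y : List α} : y ∈ words α n ↔ y.length = n := by
  simp only [words, mem_map, mem_univ, true_and, Function.Embedding.coeFn_mk]
  exact ⟨fun ⟨v, hv⟩ => hv ▸ v.toList_length, fun h => ⟨⟨y, h⟩, rfl⟩⟩

@[simp] theorem card_words : #(words α n) = Fintype.card α ^ n := by
  simp [words, card_vector]

theorem card_filter_words_succ [DecidableEq α] (P : List α → Prop) [DecidablePred P] :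
    #{y ∈ words α (n + 1) | P y} = ∑ a, #{y ∈ words α n | P (a :: y)} := by
  have hsplit : {y ∈ words α (n + 1) | P y} =
      univ.biUnion fun a => {y ∈ words α n | P (a :: y)}.map ⟨(a :: ·), List.cons_injective⟩ := by
    ext (_ | ⟨a, y⟩) <;> simp
  rw [hsplit, card_biUnion]
  · simp only [card_map]
  · intro a _ b _ hab
    simp only [Function.onFun, disjoint_left, mem_map]
    rintro _ ⟨y, -, rfl⟩ ⟨y', -, h⟩
    exact hab (List.cons_eq_cons.1 h).1.symm

theorem card_filter_sublist_words_le [DecidableEq α] (z : List α) :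
    #{y ∈ words α n | z <+ y} ≤ n.choose z.length * Fintype.card α ^ (n - z.length) := by
  induction n generalizing z with
  | zero => cases z <;> simp
  | succ n ih =>
    obtain _ | ⟨c, z⟩ := z
    · exact (card_filter_le _ _).trans (by simp)
    have hsame : #{y ∈ words α n | c :: z <+ c :: y} = #{y ∈ words α n | z <+ y} := by
      simp only [List.cons_sublist_cons]
    have hother : ∀ a ∈ ({c}ᶜ : Finset α),
        #{y ∈ words α n | c :: z <+ a :: y} = #{y ∈ words α n | c :: z <+ y} := by
      intro a ha
      rw [mem_compl, mem_singleton] at ha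
      simp [List.sublist_cons_iff, Ne.symm ha]
    rw [card_filter_words_succ, Fintype.sum_eq_add_sum_compl c, hsame, sum_congr rfl hother,
      sum_const, card_compl, card_singleton, smul_eq_mul, List.length_cons]
    set q := Fintype.card α
    set m := z.length
    have hstep :
        (q - 1) * (n.choose (m + 1) * q ^ (n - (m + 1))) ≤ n.choose (m + 1) * q ^ (n - m) := by
      rcases lt_or_ge n (m + 1) with h | h
      · simp [Nat.choose_eq_zero_of_lt h]
      · rw [show n - m = n - (m + 1) + 1 by omega, pow_succ, mul_comm (q - 1), ← mul_assoc]
        exact Nat.mul_le_mul_left _ (Nat.sub_le q 1)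
    calc #{y ∈ words α n | z <+ y} + (q - 1) * #{y ∈ words α n | c :: z <+ y}
        ≤ n.choose m * q ^ (n - m) + (q - 1) * (n.choose (m + 1) * q ^ (n - (m + 1))) :=
          add_le_add (ih z) (Nat.mul_le_mul_left _ (ih (c :: z)))
      _ ≤ n.choose m * q ^ (n - m) + n.choose (m + 1) * q ^ (n - m) := by gcongr
      _ = (n + 1).choose (m + 1) * q ^ (n + 1 - (m + 1)) := by
        rw [Nat.choose_succ_succ', add_mul, Nat.add_sub_add_right]

theorem card_filter_levenshtein_le [DecidableEq α] {t : List α} (ht : t.length = n) {r : ℕ}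
    (hr : r ≤ n) :
    #{y ∈ words α n | levenshtein Levenshtein.defaultCost t y ≤ r} ≤
      n.choose r ^ 2 * Fintype.card α ^ r := by
  have hcover : {y ∈ words α n | levenshtein Levenshtein.defaultCost t y ≤ r} ⊆
      (t.sublistsLen (n - r)).toFinset.biUnion fun z => {y ∈ words α n | z <+ y} := by
    intro y hy
    rw [mem_filter] at hy
    obtain ⟨z, hzt, hzy, hlen⟩ := Levenshtein.exists_sublist_sublist_length_le_add_levenshtein t y
    rw [mem_biUnion]
    refine ⟨z.take (n - r), ?_, mem_filter.2 ⟨hy.1, (List.take_sublist _ _).trans hzy⟩⟩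
    rw [List.mem_toFinset, List.mem_sublistsLen, List.length_take]
    exact ⟨(List.take_sublist _ _).trans hzt, by omega⟩
  have hsupersets : ∀ z ∈ (t.sublistsLen (n - r)).toFinset,
      #{y ∈ words α n | z <+ y} ≤ n.choose r * Fintype.card α ^ r := by
    intro z hz
    rw [List.mem_toFinset, List.mem_sublistsLen] at hz
    simpa [hz.2, Nat.sub_sub_self hr, Nat.choose_symm hr] using
      card_filter_sublist_words_le (n := n) z
  have hsublists : #(t.sublistsLen (n - r)).toFinset ≤ n.choose r := by
    simpa [ht, Nat.choose_symm hr] using List.toFinset_card_le (t.sublistsLen (n - r))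
  calc _ ≤ _ := card_le_card hcover
    _ ≤ #(t.sublistsLen (n - r)).toFinset * (n.choose r * Fintype.card α ^ r) :=
      card_biUnion_le_card_mul _ _ _ hsupersets
    _ ≤ n.choose r * (n.choose r * Fintype.card α ^ r) := by gcongr
    _ = n.choose r ^ 2 * Fintype.card α ^ r := by ring

end Words

theorem exists_pairwise_not_rel_card_le_card_mul {α : Type*} [DecidableEq α] (U : Finset α)
    (R : α → α → Prop) [DecidableRel R] (hrefl : ∀ x, R x x) (hsymm : ∀ x y, R x y → R y x)
    {b : ℕ} (hb : ∀ x ∈ U, #{y ∈ U | R x y} ≤ b) :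
    ∃ T ⊆ U, (T : Set α).Pairwise (fun x y => ¬R x y) ∧ #U ≤ #T * b := by
  classical
  obtain ⟨T, hT, hmax⟩ := exists_max_image
    (U.powerset.filter fun T : Finset α => (T : Set α).Pairwise fun x y => ¬R x y) card
    ⟨∅, by simp⟩
  rw [mem_filter, mem_powerset] at hT
  have hcover : U ⊆ T.biUnion fun t => {y ∈ U | R t y} := by
    intro a ha
    by_contra hfar
    simp only [mem_biUnion, mem_filter, not_exists, not_and] at hfar
    have haT : a ∉ T := fun h => hfar a h ha (hrefl a)
    have hins := hmax (insert a T) <| mem_filter.2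
      ⟨mem_powerset.2 (insert_subset ha hT.1), by
        rw [coe_insert, Set.pairwise_insert]
        exact ⟨hT.2, fun t ht _ => ⟨fun h => hfar t ht ha (hsymm _ _ h), hfar t ht ha⟩⟩⟩
    rw [card_insert_of_notMem haT] at hins
    omega
  exact ⟨T, hT.1, hT.2, (card_le_card hcover).trans
    (card_biUnion_le_card_mul _ _ _ fun t ht => hb t (hT.1 ht))⟩

theorem choose_mul_pow_mul_pow_le_add_pow {R : Type*} [CommSemiring R] [PartialOrder R]
    [IsOrderedRing R] {a b : R} (ha : 0 ≤ a) (hb : 0 ≤ b) {n k : ℕ} (hk : k ≤ n) :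
    a ^ k * b ^ (n - k) * n.choose k ≤ (a + b) ^ n := by
  rw [add_pow]
  exact single_le_sum (f := fun m => a ^ m * b ^ (n - m) * n.choose m)
    (fun _ _ => by positivity) (mem_range.2 (Nat.lt_succ_of_le hk))

theorem Real.le_rpow_div_of_pow_le {x y : ℝ} (hx : 0 ≤ x) (hy : 0 ≤ y) {k m : ℕ} (hk : k ≠ 0)
    (h : x ^ k ≤ y ^ m) : x ≤ y ^ ((m : ℝ) / k) := by
  rw [div_eq_mul_inv, Real.rpow_natCast_mul hy, Real.le_rpow_inv_iff_of_pos hx (by positivity)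
    (by positivity), Real.rpow_natCast]
  exact h

theorem choose_le_two_rpow {n r : ℕ} (hr : r ≤ n) :
    (n.choose r : ℝ) ≤ 2 ^ (24 / 5 * (r : ℝ) + ((n : ℝ) - r) / 18) := by
  have hbin := choose_mul_pow_mul_pow_le_add_pow (a := (9 / 250 : ℝ)) (b := 241 / 250)
    (by norm_num) (by norm_num) hr
  have h9 : (250 / 9 : ℝ) ≤ 2 ^ (24 / 5 : ℝ) := by
    simpa using Real.le_rpow_div_of_pow_le (k := 5) (m := 24) (by norm_num) zero_le_two
      (by norm_num) (by norm_num)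
  have h241 : (250 / 241 : ℝ) ≤ 2 ^ (1 / 18 : ℝ) := by
    simpa using Real.le_rpow_div_of_pow_le (k := 18) (m := 1) (by norm_num) zero_le_two
      (by norm_num) (by norm_num)
  have hinv : (250 / 9 : ℝ) ^ r * (250 / 241) ^ (n - r) *
      ((9 / 250) ^ r * (241 / 250) ^ (n - r)) = 1 := by
    rw [mul_mul_mul_comm, ← mul_pow, ← mul_pow]
    norm_num
  calc (n.choose r : ℝ)
        = (250 / 9) ^ r * (250 / 241) ^ (n - r) *
          ((9 / 250) ^ r * (241 / 250) ^ (n - r) * n.choose r) := by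
        rw [← mul_assoc, hinv, one_mul]
    _ ≤ (250 / 9) ^ r * (250 / 241) ^ (n - r) * 1 := by
        gcongr
        exact hbin.trans_eq (by norm_num)
    _ = (250 / 9) ^ r * (250 / 241) ^ (n - r) := mul_one _
    _ ≤ (2 ^ (24 / 5 : ℝ)) ^ r * (2 ^ (1 / 18 : ℝ)) ^ (n - r) := by
        gcongr
    _ = 2 ^ (24 / 5 * (r : ℝ) + ((n : ℝ) - r) / 18) := by
        rw [← Real.rpow_mul_natCast, ← Real.rpow_mul_natCast, ← Real.rpow_add, Nat.cast_sub hr]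
        · ring_nf
        all_goals norm_num

theorem choose_sq_mul_two_pow_le {n r : ℕ} (hr : (r : ℝ) ≤ 0.036 * n) :
    (n.choose r : ℝ) ^ 2 * 2 ^ r ≤ 2 ^ ((n : ℝ) / 2) := by
  have hrn : r ≤ n := Nat.cast_le.1 (show (r : ℝ) ≤ n by linarith [n.cast_nonneg (α := ℝ)])
  calc (n.choose r : ℝ) ^ 2 * 2 ^ r
        ≤ (2 ^ (24 / 5 * (r : ℝ) + ((n : ℝ) - r) / 18)) ^ 2 * 2 ^ r := by
        gcongr
        exact choose_le_two_rpow hrn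
    _ = 2 ^ (2 * (24 / 5 * (r : ℝ) + ((n : ℝ) - r) / 18) + r) := by
        rw [← Real.rpow_natCast _ 2, ← Real.rpow_mul zero_le_two, ← Real.rpow_natCast (2 : ℝ) r,
          ← Real.rpow_add two_pos]
        ring_nf
    _ ≤ 2 ^ ((n : ℝ) / 2) := Real.rpow_le_rpow_of_exponent_le (by norm_num) (by linarith)

theorem stmt_13_general (δ : ℝ) (h1 : δ < 0.018) (n : ℕ) :
    ∃ S : Finset (List Bool),
      (∀ x ∈ S, x.length = n) ∧
      (∀ x ∈ S, ∀ y ∈ S, x ≠ y →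
        2 * ⌊δ * (n : ℝ)⌋₊ < levenshtein Levenshtein.defaultCost x y) ∧
      (2 : ℝ) ^ ((n : ℝ) / 2) ≤ (S.card : ℝ) := by
  set r := 2 * ⌊δ * (n : ℝ)⌋₊
  have hr : (r : ℝ) ≤ 0.036 * n := by
    have hfloor : (⌊δ * (n : ℝ)⌋₊ : ℝ) ≤ 0.018 * n :=
      (Nat.cast_le.2 (Nat.floor_le_floor (by gcongr))).trans (Nat.floor_le (by positivity))
    push_cast [r]
    linarith
  have hrn : r ≤ n := Nat.cast_le.1 (show (r : ℝ) ≤ n by linarith [n.cast_nonneg (α := ℝ)])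
  obtain ⟨S, hSwords, hSfar, hScover⟩ := exists_pairwise_not_rel_card_le_card_mul (words Bool n)
    (fun x y => levenshtein Levenshtein.defaultCost x y ≤ r) (by simp)
    (fun x y h => Levenshtein.levenshtein_defaultCost_comm x y ▸ h)
    (fun t ht => card_filter_levenshtein_le (mem_words.1 ht) hrn)
  refine ⟨S, fun x hx => mem_words.1 (hSwords hx),
    fun x hx y hy hxy => not_le.1 (hSfar hx hy hxy), ?_⟩
  have hpow : (2 : ℝ) ^ ((n : ℝ) / 2) * 2 ^ ((n : ℝ) / 2) ≤ #S * 2 ^ ((n : ℝ) / 2) :=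
    calc (2 : ℝ) ^ ((n : ℝ) / 2) * 2 ^ ((n : ℝ) / 2) = #(words Bool n) := by
          rw [← Real.rpow_add two_pos, add_halves, Real.rpow_natCast, card_words]; simp
      _ ≤ #S * ((n.choose r : ℝ) ^ 2 * 2 ^ r) := by exact_mod_cast hScover
      _ ≤ #S * 2 ^ ((n : ℝ) / 2) := by gcongr; exact choose_sq_mul_two_pow_le hr
  exact le_of_mul_le_mul_right hpow (by positivity)

/-- Greedy code existence (Lemma 4.1): for every `0 < δ < 0.018` and `n ≥ 1`
there is a set of binary strings of length `n`, pairwise at Levenshtein edit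
distance greater than `2⌊δn⌋`, of cardinality at least `2^{n/2}`. -/
theorem stmt_13 (δ : ℝ) (h0 : 0 < δ) (h1 : δ < 0.018) (n : ℕ) (hn : 1 ≤ n) :
    ∃ S : Finset (List Bool),
      (∀ x ∈ S, x.length = n) ∧
      (∀ x ∈ S, ∀ y ∈ S, x ≠ y →
        2 * ⌊δ * (n : ℝ)⌋₊ < levenshtein Levenshtein.defaultCost x y) ∧
      (2 : ℝ) ^ ((n : ℝ) / 2) ≤ (S.card : ℝ) :=
  stmt_13_general δ h1 n
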